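/- arXiv:2308.14973 — 4 statements merged into one kernel-verified Lean document; each statement's English description precedes it below -/
import Mathlib

section
/- Let K be a field and let K⟨D₁,D₂,D₃,D₁',D₂',D₃'⟩ be the free (noncommutative) associative algebra on six generators. If q₃, q₁', q₂', q₃' are elements of this algebra satisfying q₃·(1 − D₂D₃D₁) + q₁'·(D₃D₁ − D₂') + q₂'·(D₁ − D₃'D₃D₁) + q₃'·(1 − D₁'D₁) = 0, then q₃ = q₁' = q₂' = q₃' = 0. -/
/-!
Give the generator `D₂'` weight 3 and every other generator weight 1. Each of the four right
factors then has a unique word of maximal weight — `D₂D₃D₁`, `D₂'`, `D₃'D₃D₁`, `D₁'D₁` — and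
none of these words is a suffix of another. Among all words `u·Lᵢ` with `u` in the support of
`qᵢ` and `Lᵢ` the leading word of the `i`-th factor, pick one of maximal weight: its coefficient
in the sum can only come from the leading term of the `i`-th summand, so it is `± qᵢ(u) ≠ 0`.
-/

open MonoidAlgebra

namespace FreeMonoid

variable {α : Type*}

def weight (w : α → ℕ) (x : FreeMonoid α) : ℕ := (x.toList.map w).sum

@[simp] lemma weight_mul (w : α → ℕ) (x y : FreeMonoid α) :
    weight w (x * y) = weight w x + weight w y := by
  simp [weight]

lemma suffix_or_suffix_of_mul_eq_mul {a b c d : FreeMonoid α} (h : c * a = d * b) :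
    a.toList <:+ b.toList ∨ b.toList <:+ a.toList := by
  have hb : b.toList <:+ (c * a).toList := h ▸ List.suffix_append d.toList b.toList
  exact List.suffix_or_suffix_of_suffix (List.suffix_append c.toList a.toList) hb

end FreeMonoid

open FreeMonoid

section LeadingWord

variable {k α : Type*} (w : α → ℕ)

def IsLeadingWord [Semiring k] (f : MonoidAlgebra k (FreeMonoid α)) (L : FreeMonoid α) : Prop :=
  f.coeff L ≠ 0 ∧ ∀ y ∈ f.coeff.support, y ≠ L → weight w y < weight w L

variable {w}

lemma isLeadingWord_single_sub_single [Ring k] {a b : FreeMonoid α} {r s : k} (hs : s ≠ 0)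
    (hab : weight w a < weight w b) :
    IsLeadingWord w (single a r - single b s) b := by
  classical
  have hba : b ≠ a := by rintro rfl; exact hab.ne rfl
  refine ⟨by simpa [coeff_single, Finsupp.single_apply, hba] using hs, fun y hy hyb => ?_⟩
  have hya : y = a := by
    by_contra hya
    simp [coeff_single, Ne.symm hya, Ne.symm hyb] at hy
  exact hya ▸ hab

lemma coeff_mul_eq_coeff_mul_single_of_isLeadingWord [Semiring k]
    {q f : MonoidAlgebra k (FreeMonoid α)} {L v : FreeMonoid α} (hf : IsLeadingWord w f L)
    (hq : ∀ x ∈ q.coeff.support, weight w x + weight w L ≤ weight w v) :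
    (q * f).coeff v = (q * single L (f.coeff L)).coeff v := by
  classical
  rw [coeff_mul, coeff_mul]
  refine Finsupp.sum_congr fun x hx => ?_
  rw [coeff_single, Finsupp.sum_single_index (by simp)]
  refine Finsupp.sum_eq_single L (fun y hy hyL => ?_) (by simp)
  have hlt := hf.2 y (Finsupp.mem_support_iff.mpr hy) hyL
  have hxy : x * y ≠ v := fun hv => by
    have := hq x hx
    rw [← hv, weight_mul] at this
    omega
  simp [hxy]

theorem eq_zero_of_sum_mul_eq_zero_of_isLeadingWord [Semiring k] [NoZeroDivisors k]
    {ι : Type*} [Fintype ι] {q f : ι → MonoidAlgebra k (FreeMonoid α)} {L : ι → FreeMonoid α}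
    (hf : ∀ i, IsLeadingWord w (f i) (L i))
    (hL : ∀ i j, (L i).toList <:+ (L j).toList → i = j)
    (h : ∑ i, q i * f i = 0) (i : ι) : q i = 0 := by
  classical
  by_contra hi
  set S := Finset.univ.sigma fun i => (q i).coeff.support
  have hS : S.Nonempty := by
    obtain ⟨u, hu⟩ := Finsupp.support_nonempty_iff.mpr (mt MonoidAlgebra.coeff_eq_zero.mp hi)
    exact ⟨⟨i, u⟩, by simpa [S] using hu⟩
  obtain ⟨⟨j, u⟩, hju, hmax⟩ := S.exists_max_image (fun p => weight w p.2 + weight w (L p.1)) hS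
  have hbound : ∀ i, ∀ x ∈ (q i).coeff.support,
      weight w x + weight w (L i) ≤ weight w (u * L j) :=
    fun i x hx => by simpa using hmax ⟨i, x⟩ (by simpa [S] using hx)
  have hcoeff := congrArg (fun p => p.coeff (u * L j)) h
  simp only [coeff_sum, coeff_zero, Finsupp.finsetSum_apply, Finsupp.coe_zero,
    Pi.zero_apply] at hcoeff
  rw [Finset.sum_eq_single j] at hcoeff
  · rw [coeff_mul_eq_coeff_mul_single_of_isLeadingWord (hf j) (hbound j),
      coeff_mul_single_eq_coeff_mul u (fun x _ => mul_left_inj _)] at hcoeff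
    exact (mul_ne_zero (by simpa [S] using hju) (hf j).1) hcoeff
  · intro i _ hij
    rw [coeff_mul_eq_coeff_mul_single_of_isLeadingWord (hf i) (hbound i)]
    refine coeff_mul_single_of_forall_mul_ne _ _ fun d hd => hij ?_
    rcases suffix_or_suffix_of_mul_eq_mul hd with hij' | hji
    · exact hL i j hij'
    · exact (hL j i hji).symm
  · simp

end LeadingWord

-- Generators: `0 ↦ D₁, 1 ↦ D₂, 2 ↦ D₃, 3 ↦ D₁', 4 ↦ D₂', 5 ↦ D₃'`.
/-- Proposition 2.1: in the free associative algebra `K⟨D₁,…,D₃'⟩` (generators indexed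
`0 ↦ D₁, 1 ↦ D₂, 2 ↦ D₃, 3 ↦ D₁', 4 ↦ D₂', 5 ↦ D₃'`), the equation
`q₃(1 − D₂D₃D₁) + q₁'(D₃D₁ − D₂') + q₂'(D₁ − D₃'D₃D₁) + q₃'(1 − D₁'D₁) = 0`
forces all four unknowns to vanish. -/
theorem stmt_0 (K : Type*) [Field K]
    (q3 q1' q2' q3' : FreeAlgebra K (Fin 6))
    (h : q3 * (1 - FreeAlgebra.ι K 1 * FreeAlgebra.ι K 2 * FreeAlgebra.ι K 0)
        + q1' * (FreeAlgebra.ι K 2 * FreeAlgebra.ι K 0 - FreeAlgebra.ι K 4)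
        + q2' * (FreeAlgebra.ι K 0
            - FreeAlgebra.ι K 5 * FreeAlgebra.ι K 2 * FreeAlgebra.ι K 0)
        + q3' * (1 - FreeAlgebra.ι K 3 * FreeAlgebra.ι K 0) = 0) :
    q3 = 0 ∧ q1' = 0 ∧ q2' = 0 ∧ q3' = 0 := by
  let e := FreeAlgebra.equivMonoidAlgebraFreeMonoid (R := K) (X := Fin 6)
  have he : ∀ i, e (FreeAlgebra.ι K i) = single (of i) 1 := fun i => by
    simp [e, FreeAlgebra.equivMonoidAlgebraFreeMonoid]
  -- With plain length, `D₃D₁` would lead `D₃D₁ − D₂'` and be a suffix of `D₂D₃D₁`.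
  let w : Fin 6 → ℕ := fun i => if i = 4 then 3 else 1
  let L : Fin 4 → FreeMonoid (Fin 6) :=
    ![of 1 * of 2 * of 0, of 4, of 5 * of 2 * of 0, of 3 * of 0]
  let f : Fin 4 → MonoidAlgebra K (FreeMonoid (Fin 6)) :=
    ![single 1 1 - single (L 0) 1, single (of 2 * of 0) 1 - single (L 1) 1,
      single (of 0) 1 - single (L 2) 1, single 1 1 - single (L 3) 1]
  have hf : ∀ i, IsLeadingWord w (f i) (L i) := by
    intro i
    fin_cases i <;> exact isLeadingWord_single_sub_single one_ne_zero (by decide)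
  have hL : ∀ i j, (L i).toList <:+ (L j).toList → i = j := by decide
  have hsum : ∑ i, ![e q3, e q1', e q2', e q3'] i * f i = 0 := by
    simpa [Fin.sum_univ_four, f, L, he, one_def] using congrArg e h
  simpa [Fin.forall_fin_succ] using eq_zero_of_sum_mul_eq_zero_of_isLeadingWord hf hL hsum
end

section
/- Let A = K⟨X₁,…,X₆⟩ be the free associative algebra over a field K on six generators. The map φ : A⁴ → A defined by φ(q₃,q₁',q₂',q₃') = q₃(1 − X₂X₃X₁) + q₁'(X₃X₁ − X₅) + q₂'(X₁ − X₆X₃X₁) + q₃'(1 − X₄X₁) is an injective left A-module homomorphism. -/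
/-! Right division by a letter `x` (keep the words ending in `x` and strip that last letter) is a
linear endomorphism `∂ₓ` of `K⟨X⟩` with `∂ₓ(p X_y) = δ_{xy} p`, and it shortens words. Applied to a
relation `φ(q₃, q₁', q₂', q₃') = 0`, `∂₅` gives `q₁' = ∂₅(q₃ + q₃')`, then `∂₁` followed by `∂₄`
gives `q₃'`, and `∂₁`, `∂₃` followed by `∂₂` or `∂₆` give `q₃` and `q₂'`, each as a sum of right
quotients of the `q`'s. So if all four components only involve words of length `≤ n`, they only
involve words of length `< n`; descending on `n`, they vanish. The letter `Xᵢ` is `ι R (i - 1)`. -/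

open Module

theorem FreeMonoid.mul_of_inj {X : Type*} {w v : FreeMonoid X} {x y : X} :
    w * of x = v * of y ↔ w = v ∧ x = y := by
  constructor
  · intro h
    have := congrArg toList h
    simp only [toList_mul, toList_of] at this
    obtain ⟨h1, h2⟩ := List.append_inj' this rfl
    exact ⟨toList.injective h1, by simpa using h2⟩
  · rintro ⟨rfl, rfl⟩; rfl

namespace FreeAlgebra

variable {R X : Type*} [CommSemiring R]

theorem basisFreeMonoid_apply (w : FreeMonoid X) :
    basisFreeMonoid R X w = equivMonoidAlgebraFreeMonoid.symm (MonoidAlgebra.single w 1) := by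
  simp [basisFreeMonoid]

theorem basisFreeMonoid_mul (v w : FreeMonoid X) :
    basisFreeMonoid R X v * basisFreeMonoid R X w = basisFreeMonoid R X (v * w) := by
  simp only [basisFreeMonoid_apply, ← map_mul, MonoidAlgebra.single_mul_single, mul_one]

theorem basisFreeMonoid_of (x : X) : basisFreeMonoid R X (.of x) = ι R x := by
  rw [basisFreeMonoid_apply, AlgEquiv.symm_apply_eq]
  simp [equivMonoidAlgebraFreeMonoid]

noncomputable def rightDiv (x : X) : FreeAlgebra R X →ₗ[R] FreeAlgebra R X :=
  (basisFreeMonoid R X).repr.symm.toLinearMap ∘ₗ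
    Finsupp.lcomapDomain (· * FreeMonoid.of x) (mul_left_injective _) ∘ₗ
    (basisFreeMonoid R X).repr.toLinearMap

theorem repr_rightDiv (x : X) (p : FreeAlgebra R X) (w : FreeMonoid X) :
    (basisFreeMonoid R X).repr (rightDiv x p) w = (basisFreeMonoid R X).repr p (w * .of x) := by
  simp [rightDiv, Finsupp.comapDomain_apply]

theorem rightDiv_basisFreeMonoid_mul_of [DecidableEq X] (x y : X) (w : FreeMonoid X) :
    rightDiv x (basisFreeMonoid R X (w * .of y)) = if x = y then basisFreeMonoid R X w else 0 := by
  refine (basisFreeMonoid R X).repr.injective (Finsupp.ext fun v => ?_)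
  rw [repr_rightDiv, Basis.repr_self, apply_ite (basisFreeMonoid R X).repr, map_zero]
  split_ifs with h
  · subst h
    rw [Basis.repr_self]
    exact Finsupp.single_apply_left (mul_left_injective _) w v 1
  · exact Finsupp.single_eq_of_ne fun hv => h (FreeMonoid.mul_of_inj.1 hv).2

theorem rightDiv_mul_ι [DecidableEq X] (x y : X) (p : FreeAlgebra R X) :
    rightDiv x (p * ι R y) = if x = y then p else 0 := by
  have key : rightDiv x ∘ₗ LinearMap.mulRight R (ι R y) = if x = y then LinearMap.id else 0 :=
    (basisFreeMonoid R X).ext fun w => by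
      rw [LinearMap.comp_apply, LinearMap.mulRight_apply, ← basisFreeMonoid_of,
        basisFreeMonoid_mul, rightDiv_basisFreeMonoid_mul_of]
      split_ifs <;> rfl
  split_ifs at key ⊢ <;> simpa using LinearMap.congr_fun key p

noncomputable def lengthLT (n : ℕ) : Submodule R (FreeAlgebra R X) :=
  (Finsupp.supported R R {w : FreeMonoid X | w.length < n}).comap
    (basisFreeMonoid R X).repr.toLinearMap

theorem mem_lengthLT {n : ℕ} {p : FreeAlgebra R X} :
    p ∈ lengthLT n ↔ ∀ w : FreeMonoid X, n ≤ w.length → (basisFreeMonoid R X).repr p w = 0 := by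
  simp [lengthLT, Finsupp.mem_supported']

theorem lengthLT_zero : lengthLT 0 = (⊥ : Submodule R (FreeAlgebra R X)) := by
  simp [lengthLT, Finsupp.supported_empty]

theorem lengthLT_mono : Monotone (lengthLT : ℕ → Submodule R (FreeAlgebra R X)) :=
  fun _ _ hmn => Submodule.comap_mono (Finsupp.supported_mono fun _ hw => lt_of_lt_of_le hw hmn)

theorem exists_mem_lengthLT (p : FreeAlgebra R X) : ∃ n, p ∈ lengthLT n := by
  refine ⟨((basisFreeMonoid R X).repr p).support.sup FreeMonoid.length + 1,
    mem_lengthLT.2 fun w hw => ?_⟩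
  by_contra h
  have := Finset.le_sup (f := FreeMonoid.length) (Finsupp.mem_support_iff.2 h)
  omega

theorem rightDiv_mem_lengthLT {n : ℕ} {p : FreeAlgebra R X} (hp : p ∈ lengthLT (n + 1)) (x : X) :
    rightDiv x p ∈ lengthLT n :=
  mem_lengthLT.2 fun w hw => by
    rw [repr_rightDiv]
    exact mem_lengthLT.1 hp _ (by simpa [FreeMonoid.length_mul] using hw)

theorem eq_zero_of_forall_mem_lengthLT_succ {ι : Type*} [Finite ι] (q : ι → FreeAlgebra R X)
    (h : ∀ n, (∀ k, q k ∈ lengthLT (n + 1)) → ∀ k, q k ∈ lengthLT n) : q = 0 := by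
  have of_mem : ∀ n, (∀ k, q k ∈ lengthLT n) → q = 0 := by
    intro n
    induction n with
    | zero => exact fun h0 => funext fun k => by simpa [lengthLT_zero] using h0 k
    | succ n ih => exact fun hn => ih (h n hn)
  choose n hn using fun k => exists_mem_lengthLT (q k)
  obtain ⟨N, hN⟩ := Finite.exists_le n
  exact of_mem N fun k => lengthLT_mono (hN k) (hn k)

end FreeAlgebra

open FreeAlgebra

noncomputable def phi (R : Type*) [CommRing R] :
    (Fin 4 → FreeAlgebra R (Fin 6)) →ₗ[FreeAlgebra R (Fin 6)] FreeAlgebra R (Fin 6) where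
  toFun q := q 0 * (1 - ι R 1 * ι R 2 * ι R 0) + q 1 * (ι R 2 * ι R 0 - ι R 4)
      + q 2 * (ι R 0 - ι R 5 * ι R 2 * ι R 0) + q 3 * (1 - ι R 3 * ι R 0)
  map_add' v w := by simp only [Pi.add_apply]; noncomm_ring
  map_smul' a v := by simp only [Pi.smul_apply, smul_eq_mul, RingHom.id_apply]; noncomm_ring

section phi

variable {R : Type*} [CommRing R] {q : Fin 4 → FreeAlgebra R (Fin 6)}

theorem rightDiv_relations_of_phi_eq_zero (h : phi R q = 0) :
    rightDiv 1 (rightDiv 2 (rightDiv 0 (q 0 + q 3))) + rightDiv 1 (rightDiv 2 (q 2))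
        + rightDiv 1 (q 1) = q 0 ∧
      rightDiv 4 (q 0 + q 3) = q 1 ∧
      rightDiv 5 (rightDiv 2 (rightDiv 0 (q 0 + q 3))) + rightDiv 5 (rightDiv 2 (q 2))
        + rightDiv 5 (q 1) = q 2 ∧
      rightDiv 3 (rightDiv 0 (q 0 + q 3)) + rightDiv 3 (q 2) = q 3 := by
  generalize hs : q 0 + q 3 = s
  have h₀ : s + (q 1 * ι R 2 + q 2 - q 0 * ι R 1 * ι R 2 - q 2 * ι R 5 * ι R 2
      - q 3 * ι R 3) * ι R 0 - q 1 * ι R 4 = 0 := by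
    rw [← h, ← hs]; simp only [phi, LinearMap.coe_mk, AddHom.coe_mk]; noncomm_ring
  have h₁ : rightDiv 0 s + q 2 + (q 1 - q 0 * ι R 1 - q 2 * ι R 5) * ι R 2
      - q 3 * ι R 3 = 0 := by
    have := congrArg (rightDiv 0) h₀
    simp only [map_add, map_sub, map_zero, rightDiv_mul_ι, ↓reduceIte, Fin.reduceEq] at this
    rw [← this]; noncomm_ring
  have h₂ : rightDiv 2 (rightDiv 0 s) + rightDiv 2 (q 2)
      + (q 1 - q 0 * ι R 1 - q 2 * ι R 5) = 0 := by
    simpa [rightDiv_mul_ι] using congrArg (rightDiv 2) h₁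
  refine ⟨?_, ?_, ?_, ?_⟩
  · simpa [rightDiv_mul_ι, ← add_sub_assoc, sub_eq_zero] using congrArg (rightDiv 1) h₂
  · simpa [rightDiv_mul_ι, sub_eq_zero] using congrArg (rightDiv 4) h₀
  · simpa [rightDiv_mul_ι, ← add_sub_assoc, sub_eq_zero] using congrArg (rightDiv 5) h₂
  · simpa [rightDiv_mul_ι, sub_eq_zero] using congrArg (rightDiv 3) h₁

theorem mem_lengthLT_of_phi_eq_zero (h : phi R q = 0) {n : ℕ}
    (hq : ∀ k, q k ∈ lengthLT (n + 1)) (k : Fin 4) : q k ∈ lengthLT n := by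
  obtain ⟨e₀, e₁, e₂, e₃⟩ := rightDiv_relations_of_phi_eq_zero h
  have hle := lengthLT_mono (R := R) (X := Fin 6) n.le_succ
  have hs : q 0 + q 3 ∈ lengthLT (n + 1) := add_mem (hq 0) (hq 3)
  have hs₀ := hle (rightDiv_mem_lengthLT hs 0)
  have hs₂₀ := hle (rightDiv_mem_lengthLT hs₀ 2)
  have hq₂ := hle (rightDiv_mem_lengthLT (hq 2) 2)
  fin_cases k <;> simp only [Fin.reduceFinMk, Fin.zero_eta, Fin.isValue, Fin.mk_one]
  · rw [← e₀]
    exact add_mem (add_mem (rightDiv_mem_lengthLT hs₂₀ 1) (rightDiv_mem_lengthLT hq₂ 1))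
      (rightDiv_mem_lengthLT (hq 1) 1)
  · rw [← e₁]
    exact rightDiv_mem_lengthLT hs 4
  · rw [← e₂]
    exact add_mem (add_mem (rightDiv_mem_lengthLT hs₂₀ 5) (rightDiv_mem_lengthLT hq₂ 5))
      (rightDiv_mem_lengthLT (hq 1) 5)
  · rw [← e₃]
    exact add_mem (rightDiv_mem_lengthLT hs₀ 3) (rightDiv_mem_lengthLT (hq 2) 3)

end phi

theorem phi_injective (R : Type*) [CommRing R] : Function.Injective (phi R) :=
  (injective_iff_map_eq_zero (phi R)).2 fun q h =>
    eq_zero_of_forall_mem_lengthLT_succ q fun _ => mem_lengthLT_of_phi_eq_zero h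

/-- The map `φ : A⁴ → A` on the free associative algebra `A = K⟨X₁,…,X₆⟩`
(generators indexed `0,…,5`), given by
`φ(q₃,q₁',q₂',q₃') = q₃(1 − X₂X₃X₁) + q₁'(X₃X₁ − X₅) + q₂'(X₁ − X₆X₃X₁) + q₃'(1 − X₄X₁)`,
is an injective left `A`-module homomorphism. -/
theorem stmt_1 (K : Type*) [Field K]
    (φ : (Fin 4 → FreeAlgebra K (Fin 6)) → FreeAlgebra K (Fin 6))
    (hφ : ∀ q : Fin 4 → FreeAlgebra K (Fin 6),
      φ q = q 0 * (1 - FreeAlgebra.ι K 1 * FreeAlgebra.ι K 2 * FreeAlgebra.ι K 0)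
        + q 1 * (FreeAlgebra.ι K 2 * FreeAlgebra.ι K 0 - FreeAlgebra.ι K 4)
        + q 2 * (FreeAlgebra.ι K 0
            - FreeAlgebra.ι K 5 * FreeAlgebra.ι K 2 * FreeAlgebra.ι K 0)
        + q 3 * (1 - FreeAlgebra.ι K 3 * FreeAlgebra.ι K 0)) :
    Function.Injective φ ∧
      (∀ v w : Fin 4 → FreeAlgebra K (Fin 6), φ (v + w) = φ v + φ w) ∧
      (∀ (a : FreeAlgebra K (Fin 6)) (v : Fin 4 → FreeAlgebra K (Fin 6)),
        φ (a • v) = a * φ v) := by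
  obtain rfl : φ = phi K := funext hφ
  exact ⟨phi_injective K, map_add (phi K), map_smul (phi K)⟩
end

section
/- Over K[x], every solution (q₁,q₂,q₃,q₁',q₂',q₃') ∈ K[x]⁶ of the system q₁ + q₁' − x·q₂' − x·q₃ = 0, q₂ + q₂' − x·q₃' − x·q₁ = 0, q₃ + q₃' − x·q₁' − x·q₂ = 0 is a K[x]-linear combination of g₁ = (1,1,1,−1,−1,−1), g₂ = (−x,1,0,0,−1,x), and g₃ = (−1,−1−x,0,1+x,1,0). -/
open Polynomial

/-- Every solution `(q₁,q₂,q₃,q₁',q₂',q₃') ∈ K[x]⁶` of the zeroth-generation TDI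
system is a `K[x]`-linear combination of `g₁ = (1,1,1,−1,−1,−1)`,
`g₂ = (−x,1,0,0,−1,x)` and `g₃ = (−1,−1−x,0,1+x,1,0)`. -/
theorem stmt_11 (K : Type*) [Field K] (q : Fin 6 → Polynomial K)
    (h1 : q 0 + q 3 - X * q 4 - X * q 2 = 0)
    (h2 : q 1 + q 4 - X * q 5 - X * q 0 = 0)
    (h3 : q 2 + q 5 - X * q 3 - X * q 1 = 0) :
    ∃ a b c : Polynomial K,
      q = a • ![1, 1, 1, -1, -1, -1] + b • ![-X, 1, 0, 0, -1, X]
        + c • ![-1, -1 - X, 0, 1 + X, 1, 0] := by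
  have hX : (1 - X : Polynomial K) ≠ 0 := by
    intro h
    have h' := congrArg (fun p => p.coeff 1) h
    simp [coeff_one] at h'
  have hS : q 0 + q 1 + q 2 + q 3 + q 4 + q 5 = 0 := by
    have hprod : (1 - X) * (q 0 + q 1 + q 2 + q 3 + q 4 + q 5) = 0 := by
      linear_combination h1 + h2 + h3
    rcases mul_eq_zero.mp hprod with h | h
    · exact absurd h hX
    · exact h
  refine ⟨q 2, q 1 + q 3, q 1 + q 2 + q 3 + q 4, ?_⟩
  funext i
  fin_cases i
  · show q 0 = _
    simp only [Pi.add_apply, Pi.smul_apply, smul_eq_mul, Matrix.cons_val_zero,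
      Matrix.cons_val_zero', Matrix.cons_val_succ', Matrix.cons_val_one, Matrix.head_cons]
    linear_combination hS - h3
  · show q 1 = _
    simp only [Pi.add_apply, Pi.smul_apply, smul_eq_mul, Matrix.cons_val_zero,
      Matrix.cons_val_zero', Matrix.cons_val_succ', Matrix.cons_val_one, Matrix.head_cons]
    linear_combination h2 + X * hS
  · show q 2 = _
    simp only [Pi.add_apply, Pi.smul_apply, smul_eq_mul, Matrix.cons_val_zero,
      Matrix.cons_val_zero', Matrix.cons_val_succ', Matrix.cons_val_one, Matrix.head_cons]
    ring
  · show q 3 = _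
    simp only [Pi.add_apply, Pi.smul_apply, smul_eq_mul, Matrix.cons_val_zero,
      Matrix.cons_val_zero', Matrix.cons_val_succ', Matrix.cons_val_one, Matrix.head_cons]
    linear_combination -h2 - X * hS
  · show q 4 = _
    simp only [Pi.add_apply, Pi.smul_apply, smul_eq_mul, Matrix.cons_val_zero,
      Matrix.cons_val_zero', Matrix.cons_val_succ', Matrix.cons_val_one, Matrix.head_cons]
    ring
  · show q 5 = _
    simp only [Pi.add_apply, Pi.smul_apply, smul_eq_mul, Matrix.cons_val_zero,
      Matrix.cons_val_zero', Matrix.cons_val_succ', Matrix.cons_val_one, Matrix.head_cons]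
    linear_combination h3
end

section
/- Combining Proposition 2.1 with the elimination of q₁ and q₂: the only 6-tuple (q₁,…,q₃') in the free associative algebra K⟨D₁,…,D₃'⟩ satisfying all three equations q₁ + q₁' − q₂'D₃' − q₃D₂ = 0, q₂ + q₂' − q₃'D₁' − q₁D₃ = 0, q₃ + q₃' − q₁'D₂' − q₂D₁ = 0 is the zero tuple. -/
/-!
Compare top-degree parts. If every `q k` has degree `< n + 1`, so does the left side
`q a + q a'` of each equation. On the right side the two products end in distinct letters, so
their words cannot cancel, and both factors multiplied there have degree `< n`. Every `q k`
occurs as such a factor, so the common degree bound drops by one; descending to `0` gives `q = 0`.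
-/

open FreeAlgebra FreeMonoid

theorem FreeMonoid.mul_of_ne_mul_of {α : Type*} {i j : α} (hij : i ≠ j) (u v : FreeMonoid α) :
    u * of i ≠ v * of j := by
  intro h
  simpa [hij] using congrArg (fun w => w.toList.getLast?) h

namespace FreeAlgebra

variable {R X : Type*} [CommSemiring R]

theorem basisFreeMonoid_repr_apply (f : FreeAlgebra R X) (w : FreeMonoid X) :
    (basisFreeMonoid R X).repr f w = (equivMonoidAlgebraFreeMonoid f).coeff w := rfl

theorem equivMonoidAlgebraFreeMonoid_ι (i : X) :
    equivMonoidAlgebraFreeMonoid (ι R i) = MonoidAlgebra.single (of i) 1 := by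
  simp [equivMonoidAlgebraFreeMonoid, MonoidAlgebra.of_apply]

theorem basisFreeMonoid_repr_mul_ι (x : FreeAlgebra R X) (i : X) (w : FreeMonoid X) :
    (basisFreeMonoid R X).repr (x * ι R i) (w * of i) = (basisFreeMonoid R X).repr x w := by
  simp [basisFreeMonoid_repr_apply, equivMonoidAlgebraFreeMonoid_ι]

theorem basisFreeMonoid_repr_mul_ι_of_ne (y : FreeAlgebra R X) {i j : X} (hij : i ≠ j)
    (w : FreeMonoid X) : (basisFreeMonoid R X).repr (y * ι R j) (w * of i) = 0 := by
  simp only [basisFreeMonoid_repr_apply, map_mul, equivMonoidAlgebraFreeMonoid_ι]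
  exact MonoidAlgebra.coeff_mul_single_of_forall_mul_ne _ _ fun d => mul_of_ne_mul_of hij.symm d w

def DegreeLT (n : ℕ) (f : FreeAlgebra R X) : Prop :=
  ∀ w : FreeMonoid X, n ≤ w.length → (basisFreeMonoid R X).repr f w = 0

theorem degreeLT_zero_iff {f : FreeAlgebra R X} : DegreeLT 0 f ↔ f = 0 := by
  refine ⟨fun hf => (basisFreeMonoid R X).repr.map_eq_zero_iff.1 ?_, fun hf w _ => by simp [hf]⟩
  ext w
  exact hf w w.length.zero_le

theorem DegreeLT.mono {m n : ℕ} {f : FreeAlgebra R X} (hf : DegreeLT m f) (hmn : m ≤ n) :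
    DegreeLT n f :=
  fun w hw => hf w (hmn.trans hw)

theorem DegreeLT.add {n : ℕ} {f g : FreeAlgebra R X} (hf : DegreeLT n f) (hg : DegreeLT n g) :
    DegreeLT n (f + g) := by
  intro w hw
  rw [map_add, Finsupp.add_apply, hf w hw, hg w hw, add_zero]

theorem exists_degreeLT (f : FreeAlgebra R X) : ∃ n, DegreeLT n f := by
  refine ⟨((basisFreeMonoid R X).repr f).support.sup length + 1, fun w hw => ?_⟩
  by_contra hf
  have := Finset.le_sup (f := length) (Finsupp.mem_support_iff.2 hf)
  omega

theorem exists_forall_degreeLT {ι : Type*} [Finite ι] (q : ι → FreeAlgebra R X) :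
    ∃ n, ∀ k, DegreeLT n (q k) := by
  choose d hd using fun k => exists_degreeLT (q k)
  obtain ⟨n, hn⟩ := Finite.exists_le d
  exact ⟨n, fun k => (hd k).mono (hn k)⟩

theorem DegreeLT.of_mul_ι_add_mul_ι {n : ℕ} {x y : FreeAlgebra R X} {i j : X} (hij : i ≠ j)
    (h : DegreeLT (n + 1) (x * ι R i + y * ι R j)) : DegreeLT n x ∧ DegreeLT n y := by
  have left : ∀ {x y : FreeAlgebra R X} {i j : X}, i ≠ j →
      DegreeLT (n + 1) (x * ι R i + y * ι R j) → DegreeLT n x := by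
    intro x y i j hij h w hw
    have := h (w * of i) (by rw [length_mul, length_of]; omega)
    rwa [map_add, Finsupp.add_apply, basisFreeMonoid_repr_mul_ι,
      basisFreeMonoid_repr_mul_ι_of_ne _ hij, add_zero] at this
  exact ⟨left hij h, left hij.symm (add_comm (x * ι R i) _ ▸ h)⟩

end FreeAlgebra

/-- The only 6-tuple `(q₁,q₂,q₃,q₁',q₂',q₃')` in the free associative algebra
`K⟨D₁,…,D₃'⟩` (generators indexed `0 ↦ D₁,…,5 ↦ D₃'`) satisfying
`q₁ + q₁' − q₂'D₃' − q₃D₂ = 0`, `q₂ + q₂' − q₃'D₁' − q₁D₃ = 0`,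
`q₃ + q₃' − q₁'D₂' − q₂D₁ = 0` is the zero tuple. -/
theorem stmt_18 (K : Type*) [Field K]
    (q : Fin 6 → FreeAlgebra K (Fin 6))
    (h1 : q 0 + q 3 - q 4 * FreeAlgebra.ι K 5 - q 2 * FreeAlgebra.ι K 1 = 0)
    (h2 : q 1 + q 4 - q 5 * FreeAlgebra.ι K 3 - q 0 * FreeAlgebra.ι K 2 = 0)
    (h3 : q 2 + q 5 - q 3 * FreeAlgebra.ι K 4 - q 1 * FreeAlgebra.ι K 0 = 0) :
    q = 0 := by
  rw [sub_sub, sub_eq_zero] at h1 h2 h3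
  have step : ∀ n, (∀ k, DegreeLT (n + 1) (q k)) → ∀ k, DegreeLT n (q k) := by
    intro n hq
    have d1 := DegreeLT.of_mul_ι_add_mul_ι (by decide) (h1 ▸ (hq 0).add (hq 3))
    have d2 := DegreeLT.of_mul_ι_add_mul_ι (by decide) (h2 ▸ (hq 1).add (hq 4))
    have d3 := DegreeLT.of_mul_ι_add_mul_ι (by decide) (h3 ▸ (hq 2).add (hq 5))
    intro k
    fin_cases k
    exacts [d2.2, d3.2, d1.2, d3.1, d1.1, d2.1]
  have descent : ∀ n, (∀ k, DegreeLT n (q k)) → ∀ k, q k = 0 := by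
    intro n
    induction n with
    | zero => exact fun hq k => degreeLT_zero_iff.1 (hq k)
    | succ n ih => exact fun hq => ih (step n hq)
  obtain ⟨N, hN⟩ := exists_forall_degreeLT q
  exact funext (descent N hN)
end
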